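/- Assume Δ_K ∉ {−4, −3}, Δ_K > 0, h = h(1), N_{K/ℚ}(γ^{1/h₂}) = 1, 2h₂ | d, and let n be a positive integer with d | n, Δ_K ∤ n, and Δ₁ | n or Δ₂ | n (so γ^{1/h₂} has a square root in K(ζ_n)). Let σ₀ be the unique element of Gal(K(ζ_n)/ℚ) with σ₀(√Δ_K) = −√Δ_K and σ₀(ζ_n) = ζ_n^{−1}. Then for any square root w ∈ K(ζ_n) of γ^{1/h₂}, one has σ₀(w) = w^{−1} if and only if either (c < 0 and Δ₁ | n) or (c > 0 and Δ₂ | n). -/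

import Mathlib

open scoped Classical
open Polynomial

noncomputable section

/-- The standard primitive `n`-th root of unity `e^{2πi/n}`. -/
def zeta (n : ℕ) : ℂ := Complex.exp (2 * Real.pi * Complex.I / n)

/-- `v ∣ d^∞`: every prime factor of `v` divides `d`. -/
def DvdInf (v d : ℕ) : Prop := ∀ p : ℕ, p.Prime → p ∣ v → p ∣ d

/-- `(h, m^∞)`: the largest divisor of `h` all of whose prime factors divide `m`. -/
def expPart (h m : ℕ) : ℕ :=
  ∏ p ∈ h.primeFactors, if p ∣ m then p ^ (h.factorization p) else 1

/-- The cyclotomic field `ℚ(ζ_n)` inside `ℂ`. -/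
def Qzeta (n : ℕ) : IntermediateField ℚ ℂ := IntermediateField.adjoin ℚ {zeta n}

/-- The cyclotomic-Kummer extension `K(ζ_n, γ^{1/d})` inside `ℂ` (for `d ∣ n` this does
not depend on the choice of the `d`-th root of `γ`, so we adjoin all of them). -/
def KK (K : IntermediateField ℚ ℂ) (γ : ℂ) (n d : ℕ) : IntermediateField ℚ ℂ :=
  K ⊔ IntermediateField.adjoin ℚ ({zeta n} ∪ {y : ℂ | y ^ d = γ})

/-- Existence of an automorphism σ of `K(ζ_n, γ^{1/d})` with `σ(√Δ) = −√Δ`,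
`σ(ζ_n) = ζ_n⁻¹` and `σ(γ^{1/d}) = γ^{−1/d}`. -/
def SigmaExists (K : IntermediateField ℚ ℂ) (γ : ℂ) (Δ : ℤ) (n d : ℕ) : Prop :=
  ∃ σ : KK K γ n d ≃ₐ[ℚ] KK K γ n d,
    (∀ x : KK K γ n d, (x : ℂ) ^ 2 = (Δ : ℂ) → σ x = -x) ∧
    (∀ x : KK K γ n d, (x : ℂ) = zeta n → σ x * x = 1) ∧
    (∀ x : KK K γ n d, (x : ℂ) ^ d = γ → σ x * x = 1)

/-- `δ_γ(d) = Σ_{v|d^∞} Σ_{u|d} μ(u)(1+[σ_{u,v} exists])/[K_{dv,uv}:ℚ]`. -/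
def delta (K : IntermediateField ℚ ℂ) (γ : ℂ) (Δ : ℤ) (d : ℕ) : ℝ :=
  ∑' v : ℕ, if 0 < v ∧ DvdInf v d then
      ∑ u ∈ d.divisors,
        (ArithmeticFunction.moebius u : ℝ) *
          (1 + if SigmaExists K γ Δ (d * v) (u * v) then 1 else 0) /
            (Module.finrank ℚ (KK K γ (d * v) (u * v)) : ℝ)
    else 0

/-- `δ_γ^+(d) = Σ_{v|d^∞} Σ_{u|d} μ(u)/[K_{dv,uv}:ℚ]`. -/
def deltaPlus (K : IntermediateField ℚ ℂ) (γ : ℂ) (d : ℕ) : ℝ :=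
  ∑' v : ℕ, if 0 < v ∧ DvdInf v d then
      ∑ u ∈ d.divisors,
        (ArithmeticFunction.moebius u : ℝ) /
            (Module.finrank ℚ (KK K γ (d * v) (u * v)) : ℝ)
    else 0

/-- `δ_γ^-(d) = Σ_{v|d^∞} Σ_{u|d} μ(u)[σ_{u,v} exists]/[K_{dv,uv}:ℚ]`. -/
def deltaMinus (K : IntermediateField ℚ ℂ) (γ : ℂ) (Δ : ℤ) (d : ℕ) : ℝ :=
  ∑' v : ℕ, if 0 < v ∧ DvdInf v d then
      ∑ u ∈ d.divisors,
        (ArithmeticFunction.moebius u : ℝ) *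
          (if SigmaExists K γ Δ (d * v) (u * v) then 1 else 0) /
            (Module.finrank ℚ (KK K γ (d * v) (u * v)) : ℝ)
    else 0

/-- `S_{d,e,h}(ν) = Σ_{v|d^∞, e|v} Σ_{u|d} μ(u)(uv,h)[ν∣uv]/(φ(dv)uv)`. -/
def Ssum (d e h ν : ℕ) : ℝ :=
  ∑' v : ℕ, if 0 < v ∧ DvdInf v d ∧ e ∣ v then
      ∑ u ∈ d.divisors,
        (ArithmeticFunction.moebius u : ℝ) * (Nat.gcd (u * v) h : ℝ) *
          (if ν ∣ u * v then 1 else 0) /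
            ((Nat.totient (d * v) : ℝ) * ((u * v : ℕ) : ℝ))
    else 0

/-- The fieldConductor of an abelian subfield of `ℂ`: the least `m ≥ 1` with `F ⊆ ℚ(ζ_m)`. -/
def fieldConductor (F : IntermediateField ℚ ℂ) : ℕ :=
  sInf {m : ℕ | 0 < m ∧ F ≤ Qzeta m}

/-- `ℚ(√c)` inside `ℂ`. -/
def Qsqrt (c : ℚ) : IntermediateField ℚ ℂ :=
  IntermediateField.adjoin ℚ {z : ℂ | z ^ 2 = (c : ℂ)}

/-- The absolute value of the discriminant of the quadratic (or trivial) field `ℚ(√c)`,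
realised as its fieldConductor. -/
def qdisc (c : ℚ) : ℕ := fieldConductor (Qsqrt c)

/-- `h(ζ) = h`: `h` is the largest `n ≥ 1` with `ζγ ∈ (K^×)^n`. -/
def HVal (K : IntermediateField ℚ ℂ) (γ ζ : ℂ) (h : ℕ) : Prop :=
  (0 < h ∧ ∃ x ∈ K, x ^ h = ζ * γ) ∧
    ∀ n : ℕ, 0 < n → (∃ x ∈ K, x ^ n = ζ * γ) → n ≤ h

/-- `h = max_{ζ ∈ μ(K)} h(ζ)` (upper-bound part). -/
def IsHMax (K : IntermediateField ℚ ℂ) (γ : ℂ) (h : ℕ) : Prop :=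
  ∀ ζ : ℂ, ζ ∈ K → (∃ k : ℕ, 0 < k ∧ ζ ^ k = 1) →
    ∀ n : ℕ, 0 < n → (∃ x ∈ K, x ^ n = ζ * γ) → n ≤ h

def NotRootOfUnity (γ : ℂ) : Prop := ∀ k : ℕ, 0 < k → γ ^ k ≠ 1

end


/-!
Put `Q = (w - w⁻¹) / 2`. Since `w² = u + v√Δ` has norm `1`, `w⁻² = u - v√Δ`, hence `Q² = c`,
and `(σ₀ w · w)² = σ₀(w²) w² = 1`; so `σ₀ w = w⁻¹` exactly when `σ₀ Q = -Q` (otherwise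
`σ₀ w = -w⁻¹`, so `σ₀ Q = Q`, which is not `-Q` as `Q ≠ 0`). On `ℚ(ζ_n)` the automorphism `σ₀` is complex conjugation.
If `Δ₁ ∣ n`, then `Q ∈ ℚ(√c) ⊆ ℚ(ζ_n)` and `σ₀ Q = -Q` iff `Q` is purely imaginary, i.e.
`c < 0`. If `Δ₂ ∣ n`, then `Q / √Δ ∈ ℚ(ζ_n)`, and as `σ₀` negates the real number `√Δ`,
`σ₀ Q = -Q` iff `Q / √Δ` is real, i.e. `c > 0`. As `c ≠ 0`, the two cases cannot overlap.
-/

open ComplexConjugate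

lemma zeta_pow_div {m n : ℕ} (hmn : m ∣ n) (hn : 0 < n) : zeta n ^ (n / m) = zeta m := by
  obtain ⟨k, rfl⟩ := hmn
  have hm : (m : ℂ) ≠ 0 := by exact_mod_cast left_ne_zero_of_mul hn.ne'
  have hk : (k : ℂ) ≠ 0 := by exact_mod_cast right_ne_zero_of_mul hn.ne'
  rw [Nat.mul_div_cancel_left _ (Nat.pos_of_mul_pos_right hn), zeta, zeta,
    ← Complex.exp_nat_mul]
  congr 1
  push_cast
  field_simp

lemma Qzeta_mono {m n : ℕ} (hmn : m ∣ n) (hn : 0 < n) : Qzeta m ≤ Qzeta n := by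
  rw [Qzeta, IntermediateField.adjoin_simple_le_iff, ← zeta_pow_div hmn hn]
  exact pow_mem (IntermediateField.mem_adjoin_simple_self ℚ _) _

lemma Qsqrt_le_Qzeta {c : ℚ} {n : ℕ} (hn : 0 < n) (hdvd : qdisc c ∣ n) :
    Qsqrt c ≤ Qzeta n := by
  -- `qdisc c ∣ n` with `n > 0` excludes the junk value `sInf ∅ = 0`.
  have hne : {m : ℕ | 0 < m ∧ Qsqrt c ≤ Qzeta m}.Nonempty := by
    by_contra hempty
    rw [Set.not_nonempty_iff_eq_empty] at hempty
    rw [qdisc, fieldConductor, hempty, Nat.sInf_empty, zero_dvd_iff] at hdvd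
    exact hn.ne' hdvd
  exact (Nat.sInf_mem hne).2.trans (Qzeta_mono hdvd hn)

lemma conj_zeta (n : ℕ) : conj (zeta n) = (zeta n)⁻¹ := by
  rw [zeta, ← Complex.exp_conj, ← Complex.exp_neg]
  congr 1
  simp [Complex.conj_I, map_ofNat, neg_div]

lemma Complex.conj_eq_self_iff_of_sq_eq {z : ℂ} {r : ℝ} (hz : z ≠ 0) (h : z ^ 2 = r) :
    conj z = z ↔ 0 < r := by
  have hre := congrArg Complex.re h
  have him := congrArg Complex.im h
  simp only [sq, Complex.mul_re, Complex.mul_im, Complex.ofReal_re, Complex.ofReal_im]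
    at hre him
  have hz' : z.re ≠ 0 ∨ z.im ≠ 0 := by
    by_contra! h0
    exact hz (Complex.ext h0.1 h0.2)
  rw [Complex.conj_eq_iff_im]
  constructor
  · intro h0
    simp only [h0, ne_eq, not_true_eq_false, or_false] at hz'
    nlinarith [mul_self_pos.mpr hz']
  · intro hr
    rcases mul_eq_zero.mp (by linarith : z.re * z.im = 0) with h0 | h0
    · nlinarith [mul_self_nonneg z.im]
    · exact h0

lemma Complex.conj_eq_neg_iff_of_sq_eq {z : ℂ} {r : ℝ} (hz : z ≠ 0) (h : z ^ 2 = r) :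
    conj z = -z ↔ r < 0 := by
  have hI : (Complex.I * z) ^ 2 = ((-r : ℝ) : ℂ) := by
    rw [mul_pow, h, Complex.I_sq]; push_cast; ring
  rw [← neg_pos, ← Complex.conj_eq_self_iff_of_sq_eq (mul_ne_zero Complex.I_ne_zero hz) hI,
    map_mul, Complex.conj_I, neg_mul, neg_eq_iff_eq_neg, ← mul_neg,
    mul_right_inj' Complex.I_ne_zero]

section Cyclotomic

variable {F : IntermediateField ℚ ℂ} {n : ℕ}

lemma coe_apply_eq_conj_of_mem_Qzeta (σ : F ≃ₐ[ℚ] F) (hle : Qzeta n ≤ F)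
    (hσζ : ∀ x : F, (x : ℂ) = zeta n → σ x * x = 1) {x : F} (hx : (x : ℂ) ∈ Qzeta n) :
    (σ x : ℂ) = conj (x : ℂ) := by
  let φ : Qzeta n →ₐ[ℚ] ℂ :=
    F.val.comp ((σ : F →ₐ[ℚ] F).comp (IntermediateField.inclusion hle))
  have hext : φ = (Complex.conjAe.toAlgHom.restrictScalars ℚ).comp (Qzeta n).val := by
    refine IntermediateField.algHom_ext_of_eq_adjoin ℚ rfl ?_
    rintro _ rfl
    have hζ := congrArg ((↑) : F → ℂ)
      (hσζ ⟨zeta n, hle (IntermediateField.mem_adjoin_simple_self ℚ _)⟩ rfl)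
    push_cast at hζ
    show ((σ ⟨zeta n, _⟩ : F) : ℂ) = conj (zeta n)
    rw [conj_zeta]
    exact eq_inv_of_mul_eq_one_left hζ
  exact congrArg (fun φ : Qzeta n →ₐ[ℚ] ℂ => φ ⟨x, hx⟩) hext

lemma map_eq_self_iff_of_sq_eq (hn : 0 < n) (σ : F ≃ₐ[ℚ] F) (hle : Qzeta n ≤ F)
    (hσζ : ∀ x : F, (x : ℂ) = zeta n → σ x * x = 1) {x : F} (hx0 : x ≠ 0) {r : ℚ}
    (hx : (x : ℂ) ^ 2 = r) (hr : qdisc r ∣ n) : σ x = x ↔ 0 < r := by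
  have hmem : (x : ℂ) ∈ Qzeta n :=
    Qsqrt_le_Qzeta hn hr (IntermediateField.subset_adjoin _ _ hx)
  rw [← Subtype.coe_inj, coe_apply_eq_conj_of_mem_Qzeta σ hle hσζ hmem,
    ← Rat.cast_pos (K := ℝ)]
  exact Complex.conj_eq_self_iff_of_sq_eq (by exact_mod_cast hx0)
    (by rw [hx, Complex.ofReal_ratCast])

lemma map_eq_neg_iff_of_sq_eq (hn : 0 < n) (σ : F ≃ₐ[ℚ] F) (hle : Qzeta n ≤ F)
    (hσζ : ∀ x : F, (x : ℂ) = zeta n → σ x * x = 1) {x : F} (hx0 : x ≠ 0) {r : ℚ}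
    (hx : (x : ℂ) ^ 2 = r) (hr : qdisc r ∣ n) : σ x = -x ↔ r < 0 := by
  have hmem : (x : ℂ) ∈ Qzeta n :=
    Qsqrt_le_Qzeta hn hr (IntermediateField.subset_adjoin _ _ hx)
  rw [← Subtype.coe_inj, coe_apply_eq_conj_of_mem_Qzeta σ hle hσζ hmem,
    ← Rat.cast_lt_zero (K := ℝ)]
  exact Complex.conj_eq_neg_iff_of_sq_eq (by exact_mod_cast hx0)
    (by rw [hx, Complex.ofReal_ratCast])

lemma map_eq_neg_iff_of_sq_div_eq (hn : 0 < n) (σ : F ≃ₐ[ℚ] F) (hle : Qzeta n ≤ F)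
    (hσζ : ∀ x : F, (x : ℂ) = zeta n → σ x * x = 1) {S x : F} (hS : σ S = -S) (hS0 : S ≠ 0)
    (hx0 : x ≠ 0) {r : ℚ} (hx : ((x / S : F) : ℂ) ^ 2 = r) (hr : qdisc r ∣ n) :
    σ x = -x ↔ 0 < r := by
  rw [← map_eq_self_iff_of_sq_eq hn σ hle hσζ (div_ne_zero hx0 hS0) hx hr, map_div₀, hS,
    div_neg, neg_eq_iff_eq_neg, ← neg_div, div_left_inj' hS0]

lemma map_eq_neg_iff_sign (hn : 0 < n) (σ : F ≃ₐ[ℚ] F) (hle : Qzeta n ≤ F)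
    (hσζ : ∀ x : F, (x : ℂ) = zeta n → σ x * x = 1) {Δ : ℤ} (hΔ : 0 < Δ) {S Q : F}
    (hS : σ S = -S) (hS2 : (S : ℂ) ^ 2 = Δ) (hQ0 : Q ≠ 0) {c : ℚ} (hQ2 : (Q : ℂ) ^ 2 = c)
    (hsq : qdisc c ∣ n ∨ qdisc (c / Δ) ∣ n) :
    σ Q = -Q ↔ (c < 0 ∧ qdisc c ∣ n) ∨ (0 < c ∧ qdisc (c / Δ) ∣ n) := by
  have hS0 : S ≠ 0 := by
    rintro rfl
    rw [ZeroMemClass.coe_zero, zero_pow two_ne_zero, eq_comm, Int.cast_eq_zero] at hS2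
    exact hΔ.ne' hS2
  have hc0 : c ≠ 0 := by
    rintro rfl
    rw [Rat.cast_zero, pow_eq_zero_iff two_ne_zero] at hQ2
    exact hQ0 (by exact_mod_cast hQ2)
  have key₁ : qdisc c ∣ n → (σ Q = -Q ↔ c < 0) :=
    map_eq_neg_iff_of_sq_eq hn σ hle hσζ hQ0 hQ2
  have key₂ : qdisc (c / Δ) ∣ n → (σ Q = -Q ↔ 0 < c) := fun hr => by
    have hR2 : ((Q / S : F) : ℂ) ^ 2 = (c / Δ : ℚ) := by
      push_cast
      rw [div_pow, hQ2, hS2]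
    rw [map_eq_neg_iff_of_sq_div_eq hn σ hle hσζ hS hS0 hQ0 hR2 hr]
    exact div_pos_iff_of_pos_right (by exact_mod_cast hΔ)
  rcases lt_or_gt_of_ne hc0 with hneg | hpos
  · have hnpos : ¬ 0 < c := lt_asymm hneg
    tauto
  · have hnneg : ¬ c < 0 := lt_asymm hpos
    tauto

end Cyclotomic

lemma half_sub_inv_sq {E : Type*} [Field E] [CharZero E] {w a b : E} (hw : w ^ 2 = a + b)
    (hab : a ^ 2 - b ^ 2 = 1) :
    ((w - w⁻¹) / 2) ^ 2 = (a - 1) / 2 := by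
  have hab' : (a + b) * (a - b) = 1 := by linear_combination hab
  have hw0 : w ≠ 0 := by
    rintro rfl
    rw [← hw] at hab'
    simp at hab'
  have hinv : (w⁻¹) ^ 2 = a - b := by
    rw [inv_pow, hw]
    exact inv_eq_of_mul_eq_one_right hab'
  rw [div_pow, sub_sq, hinv, hw, mul_assoc, mul_inv_cancel₀ hw0]
  ring

lemma map_mul_self_sq_eq {E G : Type*} [Field E] [FunLike G E E] [RingHomClass G E E] (σ : G)
    {w S : E} {u v : ℚ} (hS : σ S = -S) (hw : w ^ 2 = u + v * S) :
    (σ w * w) ^ 2 = (u : E) ^ 2 - (v * S) ^ 2 := by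
  rw [mul_pow, ← map_pow, hw, map_add, map_mul, map_ratCast, map_ratCast, hS]
  ring

lemma map_mul_self_eq_one_iff_map_half_sub_inv {E G : Type*} [Field E] [CharZero E]
    [FunLike G E E] [RingHomClass G E E] (σ : G) {w : E} (hw : (σ w * w) ^ 2 = 1)
    (hQ : (w - w⁻¹) / 2 ≠ 0) :
    σ w * w = 1 ↔ σ ((w - w⁻¹) / 2) = -((w - w⁻¹) / 2) := by
  have hw0 : w ≠ 0 := by rintro rfl; simp at hw
  rcases sq_eq_one_iff.mp hw with h | h
  · have hσw : σ w = w⁻¹ := eq_inv_of_mul_eq_one_left h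
    refine iff_of_true h ?_
    simp only [map_div₀, map_sub, map_inv₀, hσw, inv_inv, map_ofNat]
    ring
  · have hσw : σ w = -w⁻¹ := by rw [← neg_one_mul, ← h, mul_inv_cancel_right₀ hw0]
    have hfix : σ ((w - w⁻¹) / 2) = (w - w⁻¹) / 2 := by
      simp only [map_div₀, map_sub, map_inv₀, hσw, inv_neg, inv_inv, map_ofNat]
      ring
    rw [h, hfix, self_eq_neg]
    exact iff_of_false (by norm_num) hQ

theorem map_mul_self_eq_one_iff_sign {F : IntermediateField ℚ ℂ} {n : ℕ} (hn : 0 < n)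
    (hle : Qzeta n ≤ F) (σ : F ≃ₐ[ℚ] F) (hσζ : ∀ x : F, (x : ℂ) = zeta n → σ x * x = 1)
    {Δ : ℤ} (hΔ : 0 < Δ) (hσs : ∀ x : F, (x : ℂ) ^ 2 = Δ → σ x = -x) {s : ℂ}
    (hs : s ^ 2 = Δ) {u v : ℚ} (hv : v ≠ 0) (hnorm : u ^ 2 - v ^ 2 * Δ = 1) {w : F}
    (hw : (w : ℂ) ^ 2 = u + v * s)
    (hsq : qdisc ((u - 1) / 2) ∣ n ∨ qdisc ((u - 1) / 2 / Δ) ∣ n) :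
    σ w * w = 1 ↔ ((u - 1) / 2 < 0 ∧ qdisc ((u - 1) / 2) ∣ n) ∨
      (0 < (u - 1) / 2 ∧ qdisc ((u - 1) / 2 / Δ) ∣ n) := by
  set c : ℚ := (u - 1) / 2 with hc
  have hsF : s ∈ F := by
    have hs_eq : s = ((w : ℂ) ^ 2 - u) / v := by
      rw [hw]
      field_simp
      ring
    rw [hs_eq]
    exact div_mem (sub_mem (pow_mem w.2 2) (SubfieldClass.ratCast_mem _ u))
      (SubfieldClass.ratCast_mem _ v)
  set S : F := ⟨s, hsF⟩
  have hS2 : (S : ℂ) ^ 2 = Δ := hs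
  have hwS : w ^ 2 = u + v * S := Subtype.ext (by push_cast; exact hw)
  have hnormS : (u : F) ^ 2 - (v * S) ^ 2 = 1 := Subtype.ext (by
    push_cast
    rw [mul_pow, hS2]
    exact_mod_cast hnorm)
  have hc0 : c ≠ 0 := by
    rintro hc0
    rw [show u = 1 by linarith, one_pow, sub_eq_self] at hnorm
    exact mul_ne_zero (pow_ne_zero 2 hv) (by exact_mod_cast hΔ.ne') hnorm
  have hQ2 : ((((w - w⁻¹) / 2 : F)) : ℂ) ^ 2 = c := by
    have hQ2F : ((w - w⁻¹) / 2) ^ 2 = (c : F) := by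
      rw [half_sub_inv_sq hwS hnormS, hc]
      push_cast
      ring
    exact_mod_cast congrArg ((↑) : F → ℂ) hQ2F
  have hQ0 : (w - w⁻¹) / 2 ≠ 0 := by
    rintro hQ
    rw [hQ, ZeroMemClass.coe_zero, zero_pow two_ne_zero, eq_comm, Rat.cast_eq_zero] at hQ2
    exact hc0 hQ2
  have hσS : σ S = -S := hσs S hs
  rw [map_mul_self_eq_one_iff_map_half_sub_inv σ
    ((map_mul_self_sq_eq σ hσS hwS).trans hnormS) hQ0]
  exact map_eq_neg_iff_sign hn σ hle hσζ hΔ hσS hS2 hQ0 hQ2 hsq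

theorem stmt18_general
    (K : IntermediateField ℚ ℂ) [NumberField K]
    (hdiscpos : 0 < NumberField.discr K)
    (h : ℕ)
    (γ₀ : K)
    (s : ℂ) (hs : s ^ 2 = (NumberField.discr K : ℂ))
    (u v : ℚ) (hv : v ≠ 0)
    (hrep : (γ₀ : ℂ) ^ (h / expPart h 2) = (u : ℂ) + (v : ℂ) * s)
    (hnorm : u ^ 2 - v ^ 2 * (NumberField.discr K : ℚ) = 1)
    (c : ℚ) (hc : c = (u - 1) / 2)
    (D₁ D₂ : ℕ) (hD₁ : D₁ = qdisc c) (hD₂ : D₂ = qdisc (c / (NumberField.discr K : ℚ)))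
    (n : ℕ) (hn : 0 < n)
    (hsq : D₁ ∣ n ∨ D₂ ∣ n) :
    ∀ σ₀ : (K ⊔ Qzeta n : IntermediateField ℚ ℂ) ≃ₐ[ℚ]
        (K ⊔ Qzeta n : IntermediateField ℚ ℂ),
      (∀ x : (K ⊔ Qzeta n : IntermediateField ℚ ℂ),
        (x : ℂ) ^ 2 = (NumberField.discr K : ℂ) → σ₀ x = -x) →
      (∀ x : (K ⊔ Qzeta n : IntermediateField ℚ ℂ),
        (x : ℂ) = zeta n → σ₀ x * x = 1) →
      ∀ w : (K ⊔ Qzeta n : IntermediateField ℚ ℂ),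
        (w : ℂ) ^ 2 = (γ₀ : ℂ) ^ (h / expPart h 2) →
          (σ₀ w * w = 1 ↔ ((c < 0 ∧ D₁ ∣ n) ∨ (0 < c ∧ D₂ ∣ n))) := by
  intro σ₀ hσs hσζ w hw
  subst hc hD₁ hD₂
  exact map_mul_self_eq_one_iff_sign hn le_sup_right σ₀ hσζ hdiscpos hσs hs hv hnorm
    (hw.trans hrep) hsq

/-- computation of `σ₀(γ^{1/2h₂})` via the sign of `c`. -/
theorem stmt18
    (K : IntermediateField ℚ ℂ) [NumberField K]
    (hquad : Module.finrank ℚ K = 2)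
    (hdisc4 : NumberField.discr K ≠ -4) (hdisc3 : NumberField.discr K ≠ -3)
    (hdiscpos : 0 < NumberField.discr K)
    (γ : ℂ) (hγK : γ ∈ K) (hrou : NotRootOfUnity γ)
    (h : ℕ) (hH1 : HVal K γ 1 h) (hHmax : IsHMax K γ h)
    (γ₀ : K) (hγ₀ : (γ₀ : ℂ) ^ h = γ)
    (s : ℂ) (hs : s ^ 2 = (NumberField.discr K : ℂ))
    (u v : ℚ) (hu : u ≠ 0) (hv : v ≠ 0)
    (hrep : (γ₀ : ℂ) ^ (h / expPart h 2) = (u : ℂ) + (v : ℂ) * s)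
    (hnorm : u ^ 2 - v ^ 2 * (NumberField.discr K : ℚ) = 1)
    (c : ℚ) (hc : c = (u - 1) / 2)
    (D₁ D₂ : ℕ) (hD₁ : D₁ = qdisc c) (hD₂ : D₂ = qdisc (c / (NumberField.discr K : ℚ)))
    (d : ℕ) (hd : 0 < d) (h2h2d : 2 * expPart h 2 ∣ d)
    (n : ℕ) (hn : 0 < n) (hdn : d ∣ n)
    (hΔKn : ¬ ((NumberField.discr K) ∣ (n : ℤ)))
    (hsq : D₁ ∣ n ∨ D₂ ∣ n) :
    ∀ σ₀ : (K ⊔ Qzeta n : IntermediateField ℚ ℂ) ≃ₐ[ℚ]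
        (K ⊔ Qzeta n : IntermediateField ℚ ℂ),
      (∀ x : (K ⊔ Qzeta n : IntermediateField ℚ ℂ),
        (x : ℂ) ^ 2 = (NumberField.discr K : ℂ) → σ₀ x = -x) →
      (∀ x : (K ⊔ Qzeta n : IntermediateField ℚ ℂ),
        (x : ℂ) = zeta n → σ₀ x * x = 1) →
      ∀ w : (K ⊔ Qzeta n : IntermediateField ℚ ℂ),
        (w : ℂ) ^ 2 = (γ₀ : ℂ) ^ (h / expPart h 2) →
          (σ₀ w * w = 1 ↔ ((c < 0 ∧ D₁ ∣ n) ∨ (0 < c ∧ D₂ ∣ n))) :=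
  stmt18_general K hdiscpos h γ₀ s hs u v hv hrep hnorm c hc D₁ D₂ hD₁ hD₂ n hn hsq
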